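/- arXiv:2306.08504 — 7 statements merged into one kernel-verified Lean document; each statement's English description precedes it below -/
import Mathlib

section
/- For all points v, w, z in the Euclidean plane ℝ² with w ≠ v and z ≠ v, if the angle ∠(w, v, z) is strictly less than π/3 and dist(v, w) ≤ dist(v, z), then dist(w, z) < dist(v, z). -/
theorem stmt0 (v w z : EuclideanSpace ℝ (Fin 2)) (hw : w ≠ v) (hz : z ≠ v)
    (hangle : EuclideanGeometry.angle w v z < Real.pi / 3)
    (hle : dist v w ≤ dist v z) :
    dist w z < dist v z := by
  have hcos : (1 : ℝ) / 2 < Real.cos (EuclideanGeometry.angle w v z) := by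
    have := Real.cos_lt_cos_of_nonneg_of_le_pi (EuclideanGeometry.angle_nonneg w v z)
      (by linarith [Real.pi_pos]) hangle
    rwa [show Real.pi / 3 = Real.pi / 3 from rfl, Real.cos_pi_div_three] at this
  have law := EuclideanGeometry.law_cos w v z
  have ha : 0 < dist w v := dist_pos.mpr hw
  have hb : 0 < dist z v := dist_pos.mpr hz
  have hle' : dist w v ≤ dist z v := by rwa [dist_comm w v, dist_comm z v]
  have hsq : dist w z * dist w z < dist z v * dist z v :=
    by
    have h1 : 0 < dist w v * dist z v * (Real.cos (EuclideanGeometry.angle w v z) - 1/2) :=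
      mul_pos (mul_pos ha hb) (by linarith)
    have h2 : 0 ≤ dist w v * (dist z v - dist w v) :=
      mul_nonneg ha.le (by linarith)
    nlinarith
  have h := (mul_self_lt_mul_self_iff dist_nonneg dist_nonneg).mpr hsq
  rwa [dist_comm z v] at h
end

section
/- Let v be a point of the Euclidean plane ℝ² and let p₁, …, p₇ be seven pairwise distinct points of ℝ², each different from v. Then there exist indices i ≠ j such that ∠(p_i, v, p_j) < π/3. -/
/-!
Measure all directions from `v` by their oriented angle `θ i ∈ (-π, π]` to the direction of
`p 0`. Cutting the circle into six half-open arcs of length `π/3`, two of the seven directions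
lie in the same arc, so their oriented angles differ by less than `π/3`; the unoriented angle
between them is at most this difference.
-/

open EuclideanGeometry Real

theorem Real.Angle.abs_toReal_coe_le_abs (t : ℝ) : |(t : Angle).toReal| ≤ |t| := by
  rcases lt_or_ge |t| π with ht | ht
  · obtain ⟨hlo, hhi⟩ := abs_lt.1 ht
    rw [Angle.toReal_coe_eq_self_iff.2 ⟨hlo, hhi.le⟩]
  · exact (Angle.abs_toReal_le_pi _).trans ht

theorem exists_ne_abs_sub_lt_of_mem_Ico {ι : Type*} [Fintype ι] {n : ℕ}
    (hn : n < Fintype.card ι) {a δ : ℝ} (hδ : 0 < δ) {x : ι → ℝ}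
    (hx : ∀ i, x i ∈ Set.Ico a (a + n * δ)) : ∃ i j, i ≠ j ∧ |x i - x j| < δ := by
  have hmaps : ∀ i ∈ (Finset.univ : Finset ι), ⌊(x i - a) / δ⌋ ∈ Finset.Ico (0 : ℤ) n := by
    intro i _
    obtain ⟨hlo, hhi⟩ := hx i
    rw [Finset.mem_Ico, Int.floor_nonneg, Int.floor_lt, le_div_iff₀ hδ, div_lt_iff₀ hδ]
    constructor <;> push_cast <;> linarith
  have hcard : (Finset.Ico (0 : ℤ) n).card < (Finset.univ : Finset ι).card := by
    simpa using hn
  obtain ⟨i, -, j, -, hij, hfloor⟩ := Finset.exists_ne_map_eq_of_card_lt_of_maps_to hcard hmaps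
  refine ⟨i, j, hij, ?_⟩
  have h := Int.abs_sub_lt_one_of_floor_eq_floor hfloor
  rwa [← sub_div, sub_sub_sub_cancel_right, abs_div, abs_of_pos hδ, div_lt_one hδ] at h

section Plane

variable {V P : Type*} [NormedAddCommGroup V] [InnerProductSpace ℝ V] [MetricSpace P]
  [NormedAddTorsor V P]

theorem EuclideanGeometry.angle_le_abs_sub_oangle_toReal [Fact (Module.finrank ℝ V = 2)]
    [Module.Oriented ℝ V (Fin 2)] {v x y z : P} (hx : x ≠ v) (hy : y ≠ v) (hz : z ≠ v) :
    ∠ y v z ≤ |(∡ x v z).toReal - (∡ x v y).toReal| := by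
  have hsub : ∡ y v z = ∡ x v z - ∡ x v y := by
    rw [← oangle_add hx hy hz]
    abel
  have h := Angle.abs_toReal_coe_le_abs ((∡ x v z).toReal - (∡ x v y).toReal)
  rwa [Angle.coe_sub, Angle.coe_toReal, Angle.coe_toReal, ← hsub,
    ← angle_eq_abs_oangle_toReal hy hz] at h

theorem EuclideanGeometry.exists_ne_angle_lt_two_pi_div (hV : Module.finrank ℝ V = 2)
    {ι : Type*} [Fintype ι] {n : ℕ} (hn₀ : 0 < n) (hn : n < Fintype.card ι) {v : P}
    {p : ι → P} (hp : ∀ i, p i ≠ v) : ∃ i j, i ≠ j ∧ ∠ (p i) v (p j) < 2 * π / n := by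
  have : Fact (Module.finrank ℝ V = 2) := ⟨hV⟩
  have : FiniteDimensional ℝ V := .of_fact_finrank_eq_two
  have : Module.Oriented ℝ V (Fin 2) := ⟨(Module.finBasisOfFinrankEq ℝ V hV).orientation⟩
  obtain ⟨i₀⟩ : Nonempty ι := Fintype.card_pos_iff.1 (hn₀.trans hn)
  have hδ : 0 < 2 * π / n := by positivity
  have hθ : ∀ i, -(∡ (p i₀) v (p i)).toReal ∈ Set.Ico (-π) (-π + n * (2 * π / n)) := by
    intro i
    obtain ⟨hlo, hhi⟩ := Angle.toReal_mem_Ioc (∡ (p i₀) v (p i))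
    rw [mul_div_cancel₀ _ (Nat.cast_ne_zero.2 hn₀.ne')]
    constructor <;> linarith
  obtain ⟨i, j, hij, hlt⟩ := exists_ne_abs_sub_lt_of_mem_Ico hn hδ hθ
  refine ⟨i, j, hij, (angle_le_abs_sub_oangle_toReal (hp i₀) (hp i) (hp j)).trans_lt ?_⟩
  rwa [neg_sub_neg] at hlt

end Plane

theorem stmt1_general (v : EuclideanSpace ℝ (Fin 2)) (p : Fin 7 → EuclideanSpace ℝ (Fin 2))
    (hne : ∀ i, p i ≠ v) :
    ∃ i j : Fin 7, i ≠ j ∧ EuclideanGeometry.angle (p i) v (p j) < Real.pi / 3 := by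
  obtain ⟨i, j, hij, hlt⟩ := exists_ne_angle_lt_two_pi_div
    (finrank_euclideanSpace_fin (𝕜 := ℝ)) (n := 6) (by norm_num) (by simp) hne
  refine ⟨i, j, hij, hlt.trans_eq ?_⟩
  push_cast
  ring

theorem stmt1 (v : EuclideanSpace ℝ (Fin 2)) (p : Fin 7 → EuclideanSpace ℝ (Fin 2))
    (hinj : Function.Injective p) (hne : ∀ i, p i ≠ v) :
    ∃ i j : Fin 7, i ≠ j ∧ EuclideanGeometry.angle (p i) v (p j) < Real.pi / 3 :=
  stmt1_general v p hne
end

section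
/- Let V be a finite set of points in the Euclidean plane ℝ², let T be a minimum spanning tree of V, let v ∈ V, and let w and z be two distinct neighbours of v in T. Then ∠(w, v, z) ≥ π/3. -/
open scoped BigOperators

noncomputable section

/-- The Euclidean plane. -/
abbrev Pt : Type := EuclideanSpace ℝ (Fin 2)

/-- The length of an edge (an unordered pair of points): the Euclidean
distance between its endpoints. -/
def edgeLen : Sym2 Pt → ℝ :=
  Sym2.lift ⟨fun a b => dist a b, fun a b => dist_comm a b⟩

/-- The total length of a graph on the plane: the sum of the Euclidean
lengths of its edges. -/
def glength (G : SimpleGraph Pt) : ℝ := ∑ᶠ e ∈ G.edgeSet, edgeLen e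

/-- `G` is a spanning tree of the point set `V`: all its edges join points of
`V`, it is acyclic, and all points of `V` are pairwise connected in `G`. -/
def IsSpanningTreeOn (V : Set Pt) (G : SimpleGraph Pt) : Prop :=
  (∀ ⦃x y : Pt⦄, G.Adj x y → x ∈ V ∧ y ∈ V) ∧ G.IsAcyclic ∧
    ∀ x ∈ V, ∀ y ∈ V, G.Reachable x y

/-- `G` is a minimum spanning tree of the point set `V`. -/
def IsMSTOn (V : Set Pt) (G : SimpleGraph Pt) : Prop :=
  IsSpanningTreeOn V G ∧
    ∀ H : SimpleGraph Pt, IsSpanningTreeOn V H → glength G ≤ glength H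

/-!
Replacing the edge `vw` of a minimum spanning tree by `wz`, where `z` is another neighbour
of `v`, gives again a spanning tree, so `|vw| ≤ |wz|`; symmetrically `|vz| ≤ |wz|`. Hence `wz`
is a longest side of the triangle `wvz`, and by the law of cosines the opposite angle at `v`
has cosine at most `1 / 2`.
-/

open EuclideanGeometry SimpleGraph

section Geometry

variable {V P : Type*} [NormedAddCommGroup V] [InnerProductSpace ℝ V] [MetricSpace P]
  [NormedAddTorsor V P]

theorem EuclideanGeometry.pi_div_three_le_angle_of_dist_le_of_dist_le {p₁ p₂ p₃ : P}
    (h₁ : dist p₁ p₂ ≤ dist p₁ p₃) (h₃ : dist p₃ p₂ ≤ dist p₁ p₃) :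
    Real.pi / 3 ≤ ∠ p₁ p₂ p₃ := by
  rcases eq_or_ne p₁ p₂ with rfl | hp₁
  · rw [angle_self_left]; linarith [Real.pi_pos]
  rcases eq_or_ne p₃ p₂ with rfl | hp₃
  · rw [angle_self_right]; linarith [Real.pi_pos]
  set a := dist p₁ p₂
  set b := dist p₃ p₂
  set c := dist p₁ p₃
  have hab : 0 < a * b := mul_pos (dist_pos.mpr hp₁) (dist_pos.mpr hp₃)
  have hsides : a * a + b * b - c * c ≤ a * b := by
    rcases le_total a b with h | h <;>
      nlinarith [mul_self_le_mul_self dist_nonneg h₁, mul_self_le_mul_self dist_nonneg h₃,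
        dist_nonneg (x := p₁) (y := p₂), dist_nonneg (x := p₃) (y := p₂)]
  have hcos : Real.cos (∠ p₁ p₂ p₃) ≤ Real.cos (Real.pi / 3) := by
    have := dist_sq_eq_dist_sq_add_dist_sq_sub_two_mul_dist_mul_dist_mul_cos_angle p₁ p₂ p₃
    rw [Real.cos_pi_div_three]
    nlinarith
  exact (Real.strictAntiOn_cos.le_iff_ge ⟨angle_nonneg _ _ _, angle_le_pi _ _ _⟩
    ⟨by positivity, by linarith [Real.pi_pos]⟩).mp hcos

end Geometry

namespace SimpleGraph

variable {α : Type*} {G H : SimpleGraph α}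

theorem Reachable.of_forall_adj_reachable (hGH : ∀ ⦃a b : α⦄, G.Adj a b → H.Reachable a b)
    {x y : α} (h : G.Reachable x y) : H.Reachable x y := by
  obtain ⟨p⟩ := h
  induction p with
  | nil => rfl
  | cons h _ ih => exact (hGH h).trans ih

variable {v w z : α}

theorem IsAcyclic.not_reachable_deleteEdges_of_adj_of_adj (hG : G.IsAcyclic) (hw : G.Adj v w)
    (hz : G.Adj v z) (hwz : w ≠ z) : ¬(G.deleteEdges {s(v, w)}).Reachable w z := by
  intro h
  have hvz : (G.deleteEdges {s(v, w)}).Adj v z :=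
    deleteEdges_adj.mpr ⟨hz, fun h ↦ hwz (Sym2.congr_right.mp h).symm⟩
  exact isAcyclic_iff_forall_adj_isBridge.mp hG hw (hvz.reachable.trans h.symm)

theorem IsAcyclic.not_adj_of_adj_of_adj (hG : G.IsAcyclic) (hw : G.Adj v w) (hz : G.Adj v z)
    (hwz : w ≠ z) : ¬G.Adj w z := fun h ↦
  hG.not_reachable_deleteEdges_of_adj_of_adj hw hz hwz <|
    (deleteEdges_adj.mpr ⟨h, by simp [hw.ne.symm, hz.ne.symm]⟩).reachable

theorem IsAcyclic.deleteEdges_sup_edge (hG : G.IsAcyclic) (hw : G.Adj v w) (hz : G.Adj v z)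
    (hwz : w ≠ z) : (G.deleteEdges {s(v, w)} ⊔ edge w z).IsAcyclic :=
  (hG.anti (deleteEdges_le _)).sup_edge_of_not_reachable <|
    hG.not_reachable_deleteEdges_of_adj_of_adj hw hz hwz

theorem Reachable.deleteEdges_sup_edge (hz : G.Adj v z) (hwz : w ≠ z) {x y : α}
    (h : G.Reachable x y) : (G.deleteEdges {s(v, w)} ⊔ edge w z).Reachable x y := by
  set H := G.deleteEdges {s(v, w)} ⊔ edge w z
  have hvw : H.Reachable v w := by
    have hvz : H.Adj v z :=
      Or.inl (deleteEdges_adj.mpr ⟨hz, fun h ↦ hwz (Sym2.congr_right.mp h).symm⟩)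
    have hzw : H.Adj z w := Or.inr ((edge_adj ..).mpr ⟨Or.inr ⟨rfl, rfl⟩, hwz.symm⟩)
    exact hvz.reachable.trans hzw.reachable
  refine h.of_forall_adj_reachable fun a b hab ↦ ?_
  by_cases he : s(a, b) = s(v, w)
  · rcases Sym2.eq_iff.mp he with ⟨rfl, rfl⟩ | ⟨rfl, rfl⟩
    exacts [hvw, hvw.symm]
  · exact Adj.reachable (G := H) (Or.inl (deleteEdges_adj.mpr ⟨hab, he⟩))

end SimpleGraph

theorem edgeLen_mk (a b : Pt) : edgeLen s(a, b) = dist a b := rfl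

theorem glength_deleteEdges_sup_edge {G : SimpleGraph Pt} (hG : G.edgeSet.Finite)
    {v w z : Pt} (hvw : G.Adj v w) (hwz : w ≠ z) (hwzG : ¬G.Adj w z) :
    glength (G.deleteEdges {s(v, w)} ⊔ edge w z) + dist v w = glength G + dist w z := by
  have hedges : (G.deleteEdges {s(v, w)} ⊔ edge w z).edgeSet =
      insert s(w, z) (G.edgeSet \ {s(v, w)}) := by
    rw [edgeSet_sup, edgeSet_deleteEdges, edgeSet_edge_of_ne hwz, Set.union_comm,
      Set.singleton_union]
  unfold glength
  conv_rhs => rw [← Set.insert_sdiff_self_of_mem (G.mem_edgeSet.mpr hvw)]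
  rw [hedges, finsum_mem_insert _ (fun h ↦ hwzG h.1) (hG.subset Set.sdiff_subset),
    finsum_mem_insert _ (by simp) (hG.subset Set.sdiff_subset), edgeLen_mk, edgeLen_mk]
  ring

theorem IsSpanningTreeOn.finite_edgeSet {V : Finset Pt} {G : SimpleGraph Pt}
    (hG : IsSpanningTreeOn ↑V G) : G.edgeSet.Finite := by
  refine V.sym2.finite_toSet.subset fun e he ↦ ?_
  induction e using Sym2.ind with
  | _ x y => exact Finset.mk_mem_sym2_iff.mpr (hG.1 he)

theorem IsSpanningTreeOn.deleteEdges_sup_edge {V : Set Pt} {T : SimpleGraph Pt}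
    (hT : IsSpanningTreeOn V T) {v w z : Pt} (hw : T.Adj v w) (hz : T.Adj v z) (hwz : w ≠ z) :
    IsSpanningTreeOn V (T.deleteEdges {s(v, w)} ⊔ edge w z) := by
  obtain ⟨hV, hacyc, hconn⟩ := hT
  refine ⟨fun x y hxy ↦ ?_, hacyc.deleteEdges_sup_edge hw hz hwz,
    fun x hx y hy ↦ (hconn x hx y hy).deleteEdges_sup_edge hz hwz⟩
  rcases hxy with hxy | hxy
  · exact hV (deleteEdges_le _ hxy)
  · rcases ((edge_adj ..).mp hxy).1 with ⟨rfl, rfl⟩ | ⟨rfl, rfl⟩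
    exacts [⟨(hV hw).2, (hV hz).2⟩, ⟨(hV hz).2, (hV hw).2⟩]

theorem IsMSTOn.dist_le_dist_of_adj_of_adj {V : Finset Pt} {T : SimpleGraph Pt}
    (hT : IsMSTOn ↑V T) {v w z : Pt} (hw : T.Adj v w) (hz : T.Adj v z) (hwz : w ≠ z) :
    dist v w ≤ dist w z := by
  have hexch := glength_deleteEdges_sup_edge hT.1.finite_edgeSet hw hwz
    (hT.1.2.1.not_adj_of_adj_of_adj hw hz hwz)
  linarith [hT.2 _ (hT.1.deleteEdges_sup_edge hw hz hwz)]

theorem stmt2_general (V : Finset Pt) (T : SimpleGraph Pt) (hT : IsMSTOn ↑V T)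
    (v : Pt) (w z : Pt) (hwz : w ≠ z)
    (hw : T.Adj v w) (hz : T.Adj v z) :
    Real.pi / 3 ≤ EuclideanGeometry.angle w v z := by
  refine pi_div_three_le_angle_of_dist_le_of_dist_le ?_ ?_
  · rw [dist_comm w v]
    exact hT.dist_le_dist_of_adj_of_adj hw hz hwz
  · rw [dist_comm z v, dist_comm w z]
    exact hT.dist_le_dist_of_adj_of_adj hz hw hwz.symm

theorem stmt2 (V : Finset Pt) (T : SimpleGraph Pt) (hT : IsMSTOn ↑V T)
    (v : Pt) (hv : v ∈ V) (w z : Pt) (hwz : w ≠ z)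
    (hw : T.Adj v w) (hz : T.Adj v z) :
    Real.pi / 3 ≤ EuclideanGeometry.angle w v z :=
  stmt2_general V T hT v w z hwz hw hz
end
end

section
/- Let V be a finite set of points in the Euclidean plane ℝ² and let T be a minimum spanning tree of V. Then every vertex of T has at most six neighbours in T. -/
/-!
Replacing the edge `v w₂` of a minimum spanning tree by `w₁ w₂`, where `w₁` is another neighbour
of `v`, gives again a spanning tree; hence `|v w₂| ≤ |w₁ w₂|` for any two neighbours. Among seven
neighbours of `v`, two, say `w₁` no farther from `v` than `w₂`, lie in one of six sectors of
opening `π / 3` at `v`, and the law of cosines then gives `|w₁ w₂| < |v w₂|`.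
-/

open scoped BigOperators

noncomputable section

open Real EuclideanGeometry

theorem dist_lt_of_angle_lt_pi_div_three {V P : Type*} [NormedAddCommGroup V]
    [InnerProductSpace ℝ V] [MetricSpace P] [NormedAddTorsor V P] {p₁ p₂ p₃ : P}
    (hp₁ : p₁ ≠ p₂) (hangle : ∠ p₁ p₂ p₃ < π / 3) (hle : dist p₁ p₂ ≤ dist p₃ p₂) :
    dist p₁ p₃ < dist p₃ p₂ := by
  have hcos : 1 / 2 < Real.cos (∠ p₁ p₂ p₃) := by
    rw [← cos_pi_div_three]
    exact cos_lt_cos_of_nonneg_of_le_pi (angle_nonneg _ _ _) (by linarith [pi_pos]) hangle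
  have h₁ : 0 < dist p₁ p₂ := dist_pos.mpr hp₁
  have hsq : dist p₁ p₃ * dist p₁ p₃ < dist p₃ p₂ * dist p₃ p₂ := by
    rw [law_cos p₁ p₂ p₃]
    nlinarith [mul_pos h₁ (h₁.trans_le hle)]
  exact lt_of_mul_self_lt_mul_self₀ dist_nonneg hsq

theorem Real.Angle.abs_toReal_coe_le (θ : ℝ) : |(θ : Real.Angle).toReal| ≤ |θ| := by
  rcases lt_or_ge π |θ| with hθ | hθ
  · exact (abs_toReal_le_pi _).trans hθ.le
  rcases (abs_le.mp hθ).1.eq_or_lt with h | h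
  · rw [← h, coe_neg, neg_coe_pi, toReal_pi, abs_neg]
  · rw [toReal_coe_eq_self_iff.mpr ⟨h, (abs_le.mp hθ).2⟩]

theorem Complex.angle_le_abs_sub_arg {x y : ℂ} (hx : x ≠ 0) (hy : y ≠ 0) :
    InnerProductGeometry.angle x y ≤ |x.arg - y.arg| := by
  rw [angle_eq_abs_arg hx hy, arg_coe_angle_eq_iff_eq_toReal.mp (arg_div_coe_angle hx hy)]
  exact Real.Angle.abs_toReal_coe_le _

theorem Complex.exists_ne_angle_lt_pi_div_three {ι : Type*} (s : Finset ι) (z : ι → ℂ)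
    (hz : ∀ i ∈ s, z i ≠ 0) (hs : 6 < s.card) :
    ∃ i ∈ s, ∃ j ∈ s, i ≠ j ∧ InnerProductGeometry.angle (z i) (z j) < π / 3 := by
  have hπ : 0 < π / 3 := by positivity
  -- the six sectors `((k - 1) π / 3, k π / 3]`, `-2 ≤ k ≤ 3`, cover the range `(-π, π]` of `arg`
  let sector : ℂ → ℤ := fun w => ⌈w.arg / (π / 3)⌉
  have hmaps : ∀ i ∈ s, sector (z i) ∈ Finset.Icc (-2 : ℤ) 3 := by
    intro i _
    have h₁ : -3 < (z i).arg / (π / 3) := by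
      rw [lt_div_iff₀ hπ]; linarith [neg_pi_lt_arg (z i)]
    have h₂ : (z i).arg / (π / 3) ≤ 3 := by
      rw [div_le_iff₀ hπ]; linarith [arg_le_pi (z i)]
    rw [Finset.mem_Icc, Int.le_ceil_iff, Int.ceil_le]
    constructor <;> push_cast <;> linarith
  obtain ⟨i, hi, j, hj, hij, hsector⟩ :=
    Finset.exists_ne_map_eq_of_card_lt_of_maps_to (by simpa using hs) hmaps
  refine ⟨i, hi, j, hj, hij, (angle_le_abs_sub_arg (hz i hi) (hz j hj)).trans_lt ?_⟩
  have hclose := Int.abs_sub_lt_one_of_floor_eq_floor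
    (show ⌊-((z j).arg / (π / 3))⌋ = ⌊-((z i).arg / (π / 3))⌋ by
      rw [Int.floor_neg, Int.floor_neg]; exact congrArg Neg.neg hsector.symm)
  rwa [neg_sub_neg, ← sub_div, abs_div, abs_of_pos hπ, div_lt_one hπ] at hclose

theorem exists_ne_angle_lt_pi_div_three (v : Pt) (S : Finset Pt) (hv : v ∉ S)
    (hS : 6 < S.card) : ∃ x ∈ S, ∃ y ∈ S, x ≠ y ∧ ∠ x v y < π / 3 := by
  let e := Complex.orthonormalBasisOneI.repr.symm
  obtain ⟨x, hx, y, hy, hxy, hangle⟩ := Complex.exists_ne_angle_lt_pi_div_three S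
    (fun w => e (w -ᵥ v)) (fun w hw => by simpa [sub_eq_zero] using ne_of_mem_of_not_mem hw hv) hS
  refine ⟨x, hx, y, hy, hxy, ?_⟩
  rwa [EuclideanGeometry.angle, ← e.toLinearIsometry.angle_map]

theorem ncard_le_six_of_dist_le_dist (v : Pt) (S : Set Pt) (hfin : S.Finite) (hv : v ∉ S)
    (hS : ∀ x ∈ S, ∀ y ∈ S, x ≠ y → dist v y ≤ dist x y) : S.ncard ≤ 6 := by
  by_contra! hcard
  rw [Set.ncard_eq_toFinset_card S hfin] at hcard
  obtain ⟨x, hx, y, hy, hxy, hangle⟩ :=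
    exists_ne_angle_lt_pi_div_three v hfin.toFinset (by simpa using hv) hcard
  rw [Set.Finite.mem_toFinset] at hx hy
  have hxv : x ≠ v := ne_of_mem_of_not_mem hx hv
  have hyv : y ≠ v := ne_of_mem_of_not_mem hy hv
  rcases le_total (dist x v) (dist y v) with hle | hle
  · have := dist_lt_of_angle_lt_pi_div_three hxv hangle hle
    linarith [hS x hx y hy hxy, dist_comm v y]
  · rw [angle_comm] at hangle
    have := dist_lt_of_angle_lt_pi_div_three hyv hangle hle
    linarith [hS y hy x hx hxy.symm, dist_comm v x, dist_comm x y]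

open SimpleGraph

theorem IsSpanningTreeOn.edgeSet_finite {V : Set Pt} {T : SimpleGraph Pt}
    (hT : IsSpanningTreeOn V T) (hV : V.Finite) : T.edgeSet.Finite := by
  refine (hV.image2 Sym2.mk hV).subset ?_
  intro e he
  induction e using Sym2.ind with
  | h a b => exact Set.mem_image2_of_mem (hT.1 he).1 (hT.1 he).2

theorem glength_deleteEdges_sup_edge_s3 {G : SimpleGraph Pt} {e : Sym2 Pt} {x y : Pt}
    (hfin : G.edgeSet.Finite) (he : e ∈ G.edgeSet) (hxy : x ≠ y)
    (hnew : ¬(G.deleteEdges {e}).Adj x y) :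
    glength (G.deleteEdges {e} ⊔ edge x y) = glength G - edgeLen e + dist x y := by
  have hrest : (G.edgeSet \ {e}).Finite := hfin.sdiff
  have hedges : (G.deleteEdges {e} ⊔ edge x y).edgeSet = insert s(x, y) (G.edgeSet \ {e}) := by
    rw [edgeSet_sup, edgeSet_edge_of_ne hxy, edgeSet_deleteEdges, Set.union_comm,
      Set.singleton_union]
  have hG : glength G = edgeLen e + ∑ᶠ f ∈ G.edgeSet \ {e}, edgeLen f := by
    rw [glength, ← finsum_mem_insert _ (fun h => h.2 rfl) hrest, Set.insert_sdiff_singleton,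
      Set.insert_eq_of_mem he]
  have hxy_new : s(x, y) ∉ G.edgeSet \ {e} := by rwa [← edgeSet_deleteEdges]
  rw [hG, glength, hedges, finsum_mem_insert _ hxy_new hrest]
  simp only [edgeLen, Sym2.lift_mk]
  ring

theorem SimpleGraph.IsAcyclic.not_reachable_deleteEdges {α : Type*} {G : SimpleGraph α}
    (hG : G.IsAcyclic) {a b x : α} (hab : G.Adj a b)
    (hx : (G.deleteEdges {s(a, b)}).Reachable a x) :
    ¬(G.deleteEdges {s(a, b)}).Reachable x b :=
  fun hxb => isBridge_iff.mp (isAcyclic_iff_forall_isBridge.mp hG hab) (hx.trans hxb)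

theorem IsSpanningTreeOn.deleteEdges_sup_edge_s3 {V : Set Pt} {T : SimpleGraph Pt}
    (hT : IsSpanningTreeOn V T) {a b x : Pt} (hab : T.Adj a b)
    (hx : (T.deleteEdges {s(a, b)}).Reachable a x) (hxV : x ∈ V) :
    IsSpanningTreeOn V (T.deleteEdges {s(a, b)} ⊔ edge x b) := by
  obtain ⟨hTV, hTacyclic, hTreach⟩ := hT
  have hbV : b ∈ V := (hTV hab).2
  have hxb : ¬(T.deleteEdges {s(a, b)}).Reachable x b := hTacyclic.not_reachable_deleteEdges hab hx
  have hxb_adj : (edge x b).Adj x b := (edge_adj ..).2 ⟨Or.inl ⟨rfl, rfl⟩, fun h => hxb (h ▸ .rfl)⟩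
  refine ⟨fun u w huw => ?_, (hTacyclic.anti (deleteEdges_le _)).sup_edge_of_not_reachable hxb,
    fun u hu w hw => ?_⟩
  · rcases huw with huw | huw
    · exact hTV huw.1
    · obtain ⟨⟨rfl, rfl⟩ | ⟨rfl, rfl⟩, -⟩ := (edge_adj ..).1 huw
      exacts [⟨hxV, hbV⟩, ⟨hbV, hxV⟩]
  have hab_reach : (T.deleteEdges {s(a, b)} ⊔ edge x b).Reachable a b :=
    (hx.mono le_sup_left).trans (Adj.reachable (Or.inr hxb_adj))
  have hreach_le : T.Reachable ≤ (T.deleteEdges {s(a, b)} ⊔ edge x b).Reachable := by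
    rw [reachable_eq_reflTransGen, reachable_eq_reflTransGen]
    refine Relation.reflTransGen_closed fun c d hcd => (reachable_iff_reflTransGen c d).mp ?_
    by_cases hcd_ab : s(c, d) = s(a, b)
    · rcases Sym2.eq_iff.mp hcd_ab with ⟨rfl, rfl⟩ | ⟨rfl, rfl⟩
      exacts [hab_reach, hab_reach.symm]
    · exact Adj.reachable (Or.inl ((deleteEdges_adj ..).2 ⟨hcd, hcd_ab⟩))
  exact hreach_le _ _ (hTreach u hu w hw)

theorem IsMSTOn.dist_le_dist_of_adj {V : Set Pt} {T : SimpleGraph Pt} (hT : IsMSTOn V T)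
    (hV : V.Finite) {v w₁ w₂ : Pt} (h₁ : T.Adj v w₁) (h₂ : T.Adj v w₂) (hne : w₁ ≠ w₂) :
    dist v w₂ ≤ dist w₁ w₂ := by
  obtain ⟨hT, hmin⟩ := hT
  have hvw₁ : (T.deleteEdges {s(v, w₂)}).Adj v w₁ :=
    (deleteEdges_adj ..).2 ⟨h₁, fun h => hne (Sym2.congr_right.mp h)⟩
  have hw₁w₂ := hT.2.1.not_reachable_deleteEdges h₂ hvw₁.reachable
  have hle := hmin _ (hT.deleteEdges_sup_edge_s3 h₂ hvw₁.reachable (hT.1 h₁).2)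
  rw [glength_deleteEdges_sup_edge_s3 (hT.edgeSet_finite hV) h₂ hne
    fun h => hw₁w₂ h.reachable] at hle
  have hlen : edgeLen s(v, w₂) = dist v w₂ := rfl
  linarith

theorem stmt3 (V : Finset Pt) (T : SimpleGraph Pt) (hT : IsMSTOn ↑V T) (v : Pt) :
    (T.neighborSet v).ncard ≤ 6 :=
  ncard_le_six_of_dist_le_dist v _ (V.finite_toSet.subset fun _ hw => (hT.1.1 hw).2) T.irrefl
    fun _ hx _ hy hxy => hT.dist_le_dist_of_adj V.finite_toSet hx hy hxy

end
end

section
/- Let P be a finite set of points in the Euclidean plane ℝ², let T be a minimum spanning tree of P whose edge lengths are pairwise distinct, let s ∈ ℝ² \ P, and let a, b, c be three distinct points of P. For each pair {x, y} ⊆ {a, b, c}, let e_{xy} be the unique edge of maximum length on the unique path in T from x to y. Then the graph on vertex set P ∪ {s} whose edge set is (E(T) \ {e_{ab}, e_{bc}, e_{ac}}) together with the three edges {s,a}, {s,b}, {s,c} is a spanning tree of P ∪ {s}. -/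
/-!
Let `K = {e_ab, e_bc, e_ac}` and let `G` be the new graph. Since `T` is acyclic, a cycle of `G`
passes through `s`, so it contains a walk in `T - K` between two of `a, b, c`; but every walk in
`T` from `x` to `y` uses `e_xy`.

For connectivity it suffices that the two endpoints of every removed edge `e` are joined in `G`.
Say `e = e_xy`. On the path from `x` to `y` in `T` every other edge is strictly shorter than `e`,
so by induction on the length its endpoints are joined in `G`; `x` and `y` are joined through `s`,
and the path crosses `e` only once.
-/

open scoped BigOperators

noncomputable section

/-- The edges of `T` have pairwise distinct lengths. -/
def DistinctEdgeLengths (T : SimpleGraph Pt) : Prop :=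
  ∀ e ∈ T.edgeSet, ∀ f ∈ T.edgeSet, edgeLen e = edgeLen f → e = f

/-- `e` is the (unique) edge of maximum length on the (unique) path in `T`
from `x` to `y`: it is an edge of `T` lying on every path from `x` to `y`,
and on every such path its length is maximal. -/
def BottleneckEdge (T : SimpleGraph Pt) (x y : Pt) (e : Sym2 Pt) : Prop :=
  e ∈ T.edgeSet ∧
    ∀ p : T.Walk x y, p.IsPath → e ∈ p.edges ∧ ∀ f ∈ p.edges, edgeLen f ≤ edgeLen e

namespace SimpleGraph

variable {V : Type*} {T G H : SimpleGraph V} {u v x y : V}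

def IsStrictMaxOnTrail {α : Type*} [Preorder α] (T : SimpleGraph V) (ℓ : Sym2 V → α)
    (e : Sym2 V) (x y : V) : Prop :=
  ∃ p : T.Walk x y, p.IsTrail ∧ e ∈ p.edges ∧ ∀ f ∈ p.edges, f ≠ e → ℓ f < ℓ e

theorem Walk.reachable_of_forall_mem_edges (p : T.Walk x y)
    (hG : ∀ a b, s(a, b) ∈ p.edges → G.Reachable a b) : G.Reachable x y := by
  induction p with
  | nil => rfl
  | cons h p ih =>
    exact (hG _ _ (by simp)).trans (ih fun a b hab => hG a b (by simp [hab]))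

theorem Walk.IsTrail.reachable_or_of_mem_edges {p : T.Walk x y} (hp : p.IsTrail)
    (he : s(u, v) ∈ p.edges)
    (hG : ∀ a b, s(a, b) ∈ p.edges → s(a, b) ≠ s(u, v) → G.Reachable a b) :
    (G.Reachable x u ∧ G.Reachable v y) ∨ (G.Reachable x v ∧ G.Reachable u y) := by
  induction p with
  | nil => simp at he
  | @cons x x' y _ p ih =>
    rw [Walk.isTrail_cons] at hp
    by_cases hxe : s(x, x') = s(u, v)
    · have hx'y : G.Reachable x' y := p.reachable_of_forall_mem_edges fun a b hab =>
        hG a b (by simp [hab]) fun h => hp.2 (hxe ▸ h ▸ hab)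
      rcases Sym2.eq_iff.mp hxe with ⟨rfl, rfl⟩ | ⟨rfl, rfl⟩
      exacts [Or.inl ⟨.rfl, hx'y⟩, Or.inr ⟨.rfl, hx'y⟩]
    · have hxx' : G.Reachable x x' := hG x x' (by simp) hxe
      have he' : s(u, v) ∈ p.edges := by simpa [Ne.symm hxe] using he
      refine (ih hp.1 he' fun a b hab => hG a b (by simp [hab])).imp ?_ ?_ <;>
        exact fun h => ⟨hxx'.trans h.1, h.2⟩

theorem Reachable.of_forall_isStrictMaxOnTrail {α : Type*} [Preorder α] {ℓ : Sym2 V → α}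
    {K : Set (Sym2 V)} (hK : K.Finite)
    (hkept : ∀ a b, T.Adj a b → s(a, b) ∉ K → G.Reachable a b)
    (hmax : ∀ e ∈ K, ∃ x y, G.Reachable x y ∧ T.IsStrictMaxOnTrail ℓ e x y)
    (h : T.Reachable u v) : G.Reachable u v := by
  have hwf : K.WellFoundedOn (fun e f => ℓ e < ℓ f) :=
    Set.wellFoundedOn_image.mp (hK.image ℓ).wellFoundedOn
  have hremoved : ∀ e ∈ K, ∀ a b, e = s(a, b) → G.Reachable a b := by
    intro e he
    refine hwf.induction (P := fun e => ∀ a b, e = s(a, b) → G.Reachable a b) he ?_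
    rintro _ he ih u v rfl
    obtain ⟨x, y, hxy, p, hp, hep, hlt⟩ := hmax _ he
    have hG : ∀ a b, s(a, b) ∈ p.edges → s(a, b) ≠ s(u, v) → G.Reachable a b := by
      intro a b hab hne
      by_cases habK : s(a, b) ∈ K
      · exact ih _ habK (hlt _ hab hne) a b rfl
      · exact hkept a b (p.adj_of_mem_edges hab) habK
    rcases hp.reachable_or_of_mem_edges hep hG with ⟨hxu, hvy⟩ | ⟨hxv, huy⟩
    · exact hxu.symm.trans (hxy.trans hvy.symm)
    · exact huy.trans (hxy.symm.trans hxv)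
  obtain ⟨p⟩ := h
  refine p.reachable_of_forall_mem_edges fun a b hab => ?_
  by_cases habK : s(a, b) ∈ K
  · exact hremoved _ habK a b rfl
  · exact hkept a b (p.adj_of_mem_edges hab) habK

theorem IsAcyclic.of_attach_vertex {s : V} (hH : H.IsAcyclic)
    (hGH : ∀ a b, G.Adj a b → a ≠ s → b ≠ s → H.Adj a b)
    (hs : ∀ t t', G.Adj s t → G.Adj s t' → H.Reachable t t' → t = t') : G.IsAcyclic := by
  classical
  have hedges : ∀ {a b} (p : G.Walk a b), s ∉ p.support →
      ∀ e ∈ p.edges, e ∈ H.edgeSet := by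
    intro a b p hp e he
    induction e using Sym2.ind with
    | _ u v =>
      exact hGH u v (p.adj_of_mem_edges he)
        (fun h => hp (h ▸ p.fst_mem_support_of_mem_edges he))
        (fun h => hp (h ▸ p.snd_mem_support_of_mem_edges he))
  intro v c hc
  by_cases hsc : s ∈ c.support
  · obtain ⟨c', hc'⟩ : ∃ c' : G.Walk s s, c'.IsCycle := ⟨_, hc.rotate hsc⟩
    cases c' with
    | nil => exact Walk.not_isCycle_nil hc'
    | @cons _ t _ hst q =>
      obtain ⟨hq, hstq⟩ := (Walk.cons_isCycle_iff q hst).mp hc'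
      generalize hqr : q.reverse = r
      have hr' : r.IsPath := hqr ▸ hq.reverse
      cases r with
      | nil => exact hst.ne rfl
      | @cons _ t' _ hst' r =>
        obtain ⟨hr, hsr⟩ := (Walk.cons_isPath_iff hst' r).mp hr'
        obtain rfl : t' = t := hs t' t hst' hst ⟨r.transfer H (hedges r hsr)⟩
        apply hstq
        simpa using congrArg (s(s, t') ∈ Walk.edges ·) hqr
  · exact hH (c.transfer H (hedges c hsc)) (hc.transfer _)

section AttachStar

variable {K : Set (Sym2 V)} {s a b c : V}

theorem mem_insert_of_adj_fromEdgeSet_star {W : Set V}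
    (hT : ∀ ⦃x y⦄, T.Adj x y → x ∈ W ∧ y ∈ W)
    (ha : a ∈ W) (hb : b ∈ W) (hc : c ∈ W)
    (h : (fromEdgeSet ((T.edgeSet \ K) ∪ {s(s, a), s(s, b), s(s, c)})).Adj u v) :
    u ∈ insert s W ∧ v ∈ insert s W := by
  rcases ((fromEdgeSet_adj _).mp h).1 with ⟨huv, -⟩ | h
  · exact ⟨Or.inr (hT huv).1, Or.inr (hT huv).2⟩
  · simp only [Set.mem_insert_iff, Set.mem_singleton_iff, Sym2.eq_iff] at h
    rcases h with (⟨rfl, rfl⟩ | ⟨rfl, rfl⟩) | (⟨rfl, rfl⟩ | ⟨rfl, rfl⟩) |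
        (⟨rfl, rfl⟩ | ⟨rfl, rfl⟩) <;>
      simp [ha, hb, hc]

theorem isAcyclic_fromEdgeSet_star (hT : T.IsAcyclic) (hsT : ∀ t, ¬T.Adj s t)
    (hab : ¬(T.deleteEdges K).Reachable a b) (hbc : ¬(T.deleteEdges K).Reachable b c)
    (hac : ¬(T.deleteEdges K).Reachable a c) :
    (fromEdgeSet ((T.edgeSet \ K) ∪ {s(s, a), s(s, b), s(s, c)})).IsAcyclic := by
  refine (hT.anti (deleteEdges_le K)).of_attach_vertex (s := s) (fun u v h hu hv => ?_) ?_
  · simp only [fromEdgeSet_adj, Set.mem_union, Set.mem_sdiff, mem_edgeSet, Set.mem_insert_iff,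
      Set.mem_singleton_iff, Sym2.eq_iff, hu, hv, false_and, and_false, or_false] at h
    exact deleteEdges_adj.mpr h.1
  · have hnbr : ∀ t, (fromEdgeSet ((T.edgeSet \ K) ∪ {s(s, a), s(s, b), s(s, c)})).Adj s t →
        t = a ∨ t = b ∨ t = c := by
      simp only [fromEdgeSet_adj, Set.mem_union, Set.mem_sdiff, mem_edgeSet, hsT]
      grind
    intro t t' ht ht' hr
    rcases hnbr t ht with rfl | rfl | rfl <;> rcases hnbr t' ht' with rfl | rfl | rfl <;>
      first | rfl | exact absurd hr ‹_› | exact absurd hr.symm ‹_›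

theorem reachable_fromEdgeSet_star {α : Type*} [Preorder α] {ℓ : Sym2 V → α}
    {eab ebc eac : Sym2 V} (hsa : s ≠ a) (hsb : s ≠ b) (hsc : s ≠ c)
    (hab : T.IsStrictMaxOnTrail ℓ eab a b) (hbc : T.IsStrictMaxOnTrail ℓ ebc b c)
    (hac : T.IsStrictMaxOnTrail ℓ eac a c) (hu : T.Reachable a u) :
    (fromEdgeSet ((T.edgeSet \ {eab, ebc, eac}) ∪ {s(s, a), s(s, b), s(s, c)})).Reachable
      s u := by
  set G := fromEdgeSet ((T.edgeSet \ {eab, ebc, eac}) ∪ {s(s, a), s(s, b), s(s, c)})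
  have hsG : ∀ t, t = a ∨ t = b ∨ t = c → G.Reachable s t := by
    rintro t (rfl | rfl | rfl) <;>
      exact Adj.reachable ((fromEdgeSet_adj _).mpr ⟨by simp, ‹_›⟩)
  have hG : ∀ x y, T.Adj x y → s(x, y) ∉ ({eab, ebc, eac} : Set _) → G.Reachable x y :=
    fun x y h hK => ((fromEdgeSet_adj _).mpr ⟨Or.inl ⟨h, hK⟩, h.ne⟩).reachable
  refine (hsG a (by simp)).trans
    (hu.of_forall_isStrictMaxOnTrail (ℓ := ℓ) (Set.toFinite _) hG ?_)
  rintro e (rfl | rfl | rfl)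
  · exact ⟨a, b, (hsG a (by simp)).symm.trans (hsG b (by simp)), hab⟩
  · exact ⟨b, c, (hsG b (by simp)).symm.trans (hsG c (by simp)), hbc⟩
  · exact ⟨a, c, (hsG a (by simp)).symm.trans (hsG c (by simp)), hac⟩

end AttachStar

end SimpleGraph

namespace BottleneckEdge

open SimpleGraph

variable {T : SimpleGraph Pt} {x y : Pt} {e : Sym2 Pt}

theorem not_reachable_deleteEdges {K : Set (Sym2 Pt)} (h : BottleneckEdge T x y e)
    (he : e ∈ K) : ¬(T.deleteEdges K).Reachable x y := by
  classical
  rintro ⟨p⟩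
  have hmem := (h.2 _ (p.mapLe (deleteEdges_le K)).bypass_isPath).1
  have hp : e ∈ p.edges := by
    simpa [Walk.edges_mapLe_eq_edges] using Walk.edges_bypass_subset_edges _ hmem
  simpa [he] using p.edges_subset_edgeSet hp

theorem isStrictMaxOnTrail (hdist : DistinctEdgeLengths T) (h : BottleneckEdge T x y e)
    (hxy : T.Reachable x y) : T.IsStrictMaxOnTrail edgeLen e x y := by
  classical
  obtain ⟨p⟩ := hxy
  obtain ⟨hep, hle⟩ := h.2 _ p.bypass_isPath
  refine ⟨p.bypass, p.bypass_isPath.isTrail, hep, fun f hf hne => (hle f hf).lt_of_ne ?_⟩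
  exact fun heq => hne (hdist f (p.bypass.edges_subset_edgeSet hf) e h.1 heq)

end BottleneckEdge

theorem stmt6_general (P : Finset Pt) (T : SimpleGraph Pt) (hT : IsMSTOn ↑P T)
    (hdist : DistinctEdgeLengths T)
    (s : Pt) (hs : s ∉ P)
    (a b c : Pt) (ha : a ∈ P) (hb : b ∈ P) (hc : c ∈ P)
    (eab ebc eac : Sym2 Pt)
    (heab : BottleneckEdge T a b eab) (hebc : BottleneckEdge T b c ebc)
    (heac : BottleneckEdge T a c eac) :
    IsSpanningTreeOn (insert s ↑P)
      (SimpleGraph.fromEdgeSet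
        ((T.edgeSet \ {eab, ebc, eac}) ∪ {s(s, a), s(s, b), s(s, c)})) := by
  obtain ⟨⟨hedge, hacyc, hconn⟩, -⟩ := hT
  have hsP : ∀ t ∈ P, s ≠ t := fun t ht h => hs (h ▸ ht)
  refine ⟨fun u v h => SimpleGraph.mem_insert_of_adj_fromEdgeSet_star hedge ha hb hc h,
    SimpleGraph.isAcyclic_fromEdgeSet_star hacyc (fun t h => hs (hedge h).1)
      (heab.not_reachable_deleteEdges (by simp)) (hebc.not_reachable_deleteEdges (by simp))
      (heac.not_reachable_deleteEdges (by simp)), ?_⟩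
  have hsG : ∀ t ∈ insert s (P : Set Pt), (SimpleGraph.fromEdgeSet
      ((T.edgeSet \ {eab, ebc, eac}) ∪ {s(s, a), s(s, b), s(s, c)})).Reachable s t := by
    rintro t (rfl | ht)
    · rfl
    · exact SimpleGraph.reachable_fromEdgeSet_star (hsP a ha) (hsP b hb) (hsP c hc)
        (heab.isStrictMaxOnTrail hdist (hconn a ha b hb))
        (hebc.isStrictMaxOnTrail hdist (hconn b hb c hc))
        (heac.isStrictMaxOnTrail hdist (hconn a ha c hc)) (hconn a ha t ht)
  exact fun u hu v hv => (hsG u hu).symm.trans (hsG v hv)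

theorem stmt6 (P : Finset Pt) (T : SimpleGraph Pt) (hT : IsMSTOn ↑P T)
    (hdist : DistinctEdgeLengths T)
    (s : Pt) (hs : s ∉ P)
    (a b c : Pt) (ha : a ∈ P) (hb : b ∈ P) (hc : c ∈ P)
    (hab : a ≠ b) (hbc : b ≠ c) (hac : a ≠ c)
    (eab ebc eac : Sym2 Pt)
    (heab : BottleneckEdge T a b eab) (hebc : BottleneckEdge T b c ebc)
    (heac : BottleneckEdge T a c eac) :
    IsSpanningTreeOn (insert s ↑P)
      (SimpleGraph.fromEdgeSet
        ((T.edgeSet \ {eab, ebc, eac}) ∪ {s(s, a), s(s, b), s(s, c)})) :=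
  stmt6_general P T hT hdist s hs a b c ha hb hc eab ebc eac heab hebc heac

end
end

section
/- Let P be a finite set of points in the Euclidean plane ℝ², let T be a minimum spanning tree of P whose edge lengths are pairwise distinct, let s ∈ ℝ² \ P, and let a, b, c, d be four distinct points of P. For each of the six pairs {x, y} ⊆ {a, b, c, d}, let e_{xy} be the unique edge of maximum length on the unique path in T from x to y. Then the graph on vertex set P ∪ {s} whose edge set is (E(T) \ {e_{xy} : {x,y} ⊆ {a,b,c,d}, x ≠ y}) together with the four edges {s,a}, {s,b}, {s,c}, {s,d} is a spanning tree of P ∪ {s}. -/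
/-!
Removing the bottleneck edges `e_xy` separates `a, b, c, d` from each other in `T`, since each
`e_xy` lies on the unique `T`-path from `x` to `y`; so the new star at `s` closes no cycle.
Conversely, every point `p` still reaches one of `a, b, c, d`: if the path from `p` to such a
point uses a removed edge, reroute it at its longest removed edge `f = e_yz` along the path from
`y` to `z`, on which every edge is shorter than `f`. With distinct lengths, the removed edges
met after rerouting are all strictly shorter than `f`, so this terminates.
-/

open scoped BigOperators

noncomputable section

namespace SimpleGraph

variable {V : Type*} {G : SimpleGraph V}

theorem Walk.exists_eq_append_cons_of_mem_edges {u v : V} {e : Sym2 V} (p : G.Walk u v)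
    (he : e ∈ p.edges) :
    ∃ (x y : V) (h : G.Adj x y) (q : G.Walk u x) (r : G.Walk y v),
      p = q.append (cons h r) ∧ e = s(x, y) := by
  induction p with
  | nil => simp at he
  | cons h p ih =>
    rcases List.mem_cons.mp (edges_cons h p ▸ he) with rfl | he
    · exact ⟨_, _, h, nil, p, rfl, rfl⟩
    · obtain ⟨x, y, h', q, r, rfl, rfl⟩ := ih he
      exact ⟨x, y, h', cons h q, r, rfl, rfl⟩

theorem Walk.IsTrail.exists_edges_eq_append_cons {u v : V} {e : Sym2 V} {p : G.Walk u v}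
    (hp : p.IsTrail) (he : e ∈ p.edges) :
    ∃ (x y : V) (q : G.Walk u x) (r : G.Walk y v), e = s(x, y) ∧
      p.edges = q.edges ++ e :: r.edges ∧ e ∉ q.edges ∧ e ∉ r.edges := by
  obtain ⟨x, y, h, q, r, rfl, rfl⟩ := p.exists_eq_append_cons_of_mem_edges he
  have hedges : (q.append (cons h r)).edges = q.edges ++ s(x, y) :: r.edges := by simp
  have hnodup := hedges ▸ hp.edges_nodup
  refine ⟨x, y, q, r, rfl, hedges, fun hq => ?_,
    (List.nodup_cons.mp (List.nodup_append.mp hnodup).2.1).1⟩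
  exact List.disjoint_of_nodup_append hnodup hq (List.mem_cons_self ..)

theorem Walk.IsCycle.exists_walk_between_neighbors {u : V} {c : G.Walk u u} (hc : c.IsCycle) :
    ∃ x y, x ≠ y ∧ G.Adj u x ∧ G.Adj u y ∧ ∃ r : G.Walk x y, u ∉ r.support := by
  cases c with
  | nil => exact absurd rfl hc.ne_nil
  | cons h q =>
    have hnil := not_nil_of_isCycle_cons hc
    rw [cons_isCycle_iff] at hc
    cases q with
    | nil => exact absurd nil_nil hnil
    | cons h₁ q₁ =>
      obtain ⟨y, r, h', hr⟩ := exists_cons_eq_concat h₁ q₁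
      rw [hr, concat_isPath_iff] at hc
      refine ⟨_, y, ?_, h, h'.symm, r, hc.1.2⟩
      rintro rfl
      obtain rfl := isPath_iff_nil.mp hc.1.1 |>.eq_nil
      exact hc.2 (by simp [Sym2.eq_swap])

def starOn (s : V) (S : Set V) : SimpleGraph V := fromEdgeSet ((fun x => s(s, x)) '' S)

theorem starOn_adj {s u v : V} {S : Set V} :
    (starOn s S).Adj u v ↔ ((u = s ∧ v ∈ S) ∨ (v = s ∧ u ∈ S)) ∧ u ≠ v := by
  simp only [starOn, fromEdgeSet_adj, Set.mem_image, Sym2.eq_iff]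
  grind

theorem starOn_adj_center {s x : V} {S : Set V} (hx : x ∈ S) (hsx : s ≠ x) :
    (starOn s S).Adj s x :=
  starOn_adj.mpr ⟨.inl ⟨rfl, hx⟩, hsx⟩

variable {H : SimpleGraph V} {s : V} {S : Set V}

theorem Walk.edges_subset_edgeSet_of_sup_starOn {x y : V} (r : (H ⊔ starOn s S).Walk x y)
    (hr : s ∉ r.support) : ∀ e ∈ r.edges, e ∈ H.edgeSet := by
  intro e he
  rcases edgeSet_sup H _ ▸ r.edges_subset_edgeSet he with he' | he'
  · exact he'
  · rw [starOn, edgeSet_fromEdgeSet] at he'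
    obtain ⟨⟨x, -, rfl⟩, -⟩ := he'
    exact absurd (r.fst_mem_support_of_mem_edges he) hr

theorem IsAcyclic.sup_starOn (hH : H.IsAcyclic) (hs : ∀ v, ¬H.Adj s v)
    (hS : S.Pairwise fun x y => ¬H.Reachable x y) : (H ⊔ starOn s S).IsAcyclic := by
  classical
  have hnbr : ∀ {v}, (H ⊔ starOn s S).Adj s v → v ∈ S := by
    intro v h
    grind [h.resolve_left (hs v), starOn_adj]
  intro v c hc
  by_cases hsc : s ∈ c.support
  · obtain ⟨x, y, hxy, hx, hy, r, hr⟩ := (hc.rotate hsc).exists_walk_between_neighbors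
    exact hS (hnbr hx) (hnbr hy) hxy ⟨r.transfer H (r.edges_subset_edgeSet_of_sup_starOn hr)⟩
  · exact hH _ (hc.transfer (c.edges_subset_edgeSet_of_sup_starOn hsc))

end SimpleGraph

open SimpleGraph

variable {T : SimpleGraph Pt}

theorem BottleneckEdge.not_reachable_deleteEdges_s7 {x y : Pt} {e : Sym2 Pt} {F : Set (Sym2 Pt)}
    (h : BottleneckEdge T x y e) (he : e ∈ F) : ¬(T.deleteEdges F).Reachable x y := by
  rintro ⟨p⟩
  have hmem := (h.2 _ (p.mapLe (T.deleteEdges_le F)).bypass_isPath).1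
  have hp : e ∈ p.edges := Walk.edges_mapLe_eq_edges .. ▸ Walk.edges_bypass_subset_edges _ hmem
  exact (edgeSet_deleteEdges F ▸ p.edges_subset_edgeSet hp).2 he

theorem BottleneckEdge.exists_walk_reroute {y z p x : Pt} {f : Sym2 Pt}
    (hf : BottleneckEdge T y z f) (hyz : T.Reachable y z) {q : T.Walk p x} (hq : q.IsTrail)
    (hfq : f ∈ q.edges) :
    ∃ y' ∈ ({y, z} : Set Pt), ∃ w : T.Walk p y',
      f ∉ w.edges ∧ ∀ g ∈ w.edges, g ∈ q.edges ∨ edgeLen g ≤ edgeLen f := by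
  obtain ⟨t, ht⟩ := hyz.exists_isPath
  obtain ⟨-, htmax⟩ := hf.2 t ht
  obtain ⟨u, v, q₁, q₂, rfl, hqe, hfq₁, -⟩ := hq.exists_edges_eq_append_cons hfq
  obtain ⟨u', v', t₁, t₂, huv, hte, hft₁, hft₂⟩ :=
    ht.isTrail.exists_edges_eq_append_cons (hf.2 t ht).1
  have hq₁ : ∀ g ∈ q₁.edges, g ∈ q.edges := fun g hg => hqe ▸ List.mem_append_left _ hg
  have ht₁ : ∀ g ∈ t₁.edges, edgeLen g ≤ edgeLen s(u, v) := fun g hg =>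
    htmax g (hte ▸ List.mem_append_left _ hg)
  have ht₂ : ∀ g ∈ t₂.edges, edgeLen g ≤ edgeLen s(u, v) := fun g hg =>
    htmax g (hte ▸ List.mem_append_right _ (List.mem_cons_of_mem _ hg))
  rcases Sym2.eq_iff.mp huv with ⟨rfl, rfl⟩ | ⟨rfl, rfl⟩
  · refine ⟨y, .inl rfl, q₁.append t₁.reverse, ?_, ?_⟩ <;>
      simp only [Walk.edges_append, Walk.edges_reverse, List.mem_append, List.mem_reverse]
    · tauto
    · rintro g (hg | hg)
      exacts [.inl (hq₁ g hg), .inr (ht₁ g hg)]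
  · refine ⟨z, .inr rfl, q₁.append t₂, ?_, ?_⟩ <;>
      simp only [Walk.edges_append, List.mem_append]
    · tauto
    · rintro g (hg | hg)
      exacts [.inl (hq₁ g hg), .inr (ht₂ g hg)]

variable {S : Set Pt} {F : Finset (Sym2 Pt)}

theorem exists_walk_edgeLen_lt_of_bottleneck (hdist : DistinctEdgeLengths T)
    (hS : ∀ y ∈ S, ∀ z ∈ S, T.Reachable y z)
    (hF : ∀ f ∈ F, ∃ y ∈ S, ∃ z ∈ S, BottleneckEdge T y z f) {p x : Pt} {q : T.Walk p x}
    (hq : q.IsTrail) {f : Sym2 Pt} (hf : f ∈ F) (hfq : f ∈ q.edges)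
    (hmax : ∀ g ∈ F, g ∈ q.edges → edgeLen g ≤ edgeLen f) :
    ∃ y ∈ S, ∃ w : T.Walk p y, ∀ g ∈ w.edges, g ∈ F → edgeLen g < edgeLen f := by
  obtain ⟨y, hy, z, hz, hbn⟩ := hF f hf
  obtain ⟨y', hy', w, hfw, hw⟩ := hbn.exists_walk_reroute (hS y hy z hz) hq hfq
  refine ⟨y', by rcases hy' with rfl | rfl <;> assumption, w, fun g hg hgF => ?_⟩
  have hle : edgeLen g ≤ edgeLen f := (hw g hg).elim (hmax g hgF) id
  refine hle.lt_of_ne fun heq => hfw ?_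
  rwa [← hdist g (w.edges_subset_edgeSet hg) f hbn.1 heq]

theorem exists_reachable_deleteEdges_of_bottleneck (hdist : DistinctEdgeLengths T)
    (hS : ∀ y ∈ S, ∀ z ∈ S, T.Reachable y z)
    (hF : ∀ f ∈ F, ∃ y ∈ S, ∃ z ∈ S, BottleneckEdge T y z f) {p x : Pt} (hx : x ∈ S)
    (hpx : T.Reachable p x) : ∃ y ∈ S, (T.deleteEdges ↑F).Reachable p y := by
  classical
  -- Rerouting strictly shrinks the set of `F`-edges no longer than some `F`-edge of the walk.
  let dominated {y : Pt} (r : T.Walk p y) : Finset (Sym2 Pt) :=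
    F.filter fun g => ∃ g' ∈ r.edges, g' ∈ F ∧ edgeLen g ≤ edgeLen g'
  suffices ∀ n, ∀ y ∈ S, ∀ r : T.Walk p y, (dominated r).card = n →
      ∃ y ∈ S, (T.deleteEdges ↑F).Reachable p y from
    hpx.elim fun r => this _ x hx r rfl
  intro n
  induction n using Nat.strong_induction_on with
  | _ n ih =>
  rintro y hy r rfl
  by_cases hr : ∀ g ∈ r.bypass.edges, g ∉ F
  · exact ⟨y, hy, ⟨r.bypass.toDeleteEdges _ hr⟩⟩
  push Not at hr
  obtain ⟨g₀, hg₀, hg₀F⟩ := hr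
  obtain ⟨f, hf, hfmax⟩ := (F.filter (· ∈ r.bypass.edges)).exists_max_image edgeLen
    ⟨g₀, Finset.mem_filter.mpr ⟨hg₀F, hg₀⟩⟩
  rw [Finset.mem_filter] at hf
  obtain ⟨y', hy', w, hw⟩ := exists_walk_edgeLen_lt_of_bottleneck hdist hS hF
    r.bypass_isPath.isTrail hf.1 hf.2 fun g hgF hg => hfmax g (Finset.mem_filter.mpr ⟨hgF, hg⟩)
  have hfr : f ∈ r.edges := r.edges_bypass_subset_edges hf.2
  have hsub : dominated w ⊂ dominated r := by
    refine Finset.ssubset_iff_of_subset (fun g hg => ?_) |>.mpr ⟨f, ?_, fun hf' => ?_⟩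
    · obtain ⟨hgF, g', hg', hg'F, hle⟩ := Finset.mem_filter.mp hg
      exact Finset.mem_filter.mpr ⟨hgF, f, hfr, hf.1, hle.trans (hw g' hg' hg'F).le⟩
    · exact Finset.mem_filter.mpr ⟨hf.1, f, hfr, hf.1, le_rfl⟩
    · obtain ⟨-, g', hg', hg'F, hle⟩ := Finset.mem_filter.mp hf'
      exact hle.not_gt (hw g' hg' hg'F)
  exact ih _ (Finset.card_lt_card hsub) y' hy' w rfl

theorem isSpanningTreeOn_insert_sup_starOn {H : SimpleGraph Pt} {V : Set Pt} {s : Pt}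
    (hHV : ∀ ⦃x y : Pt⦄, H.Adj x y → x ∈ V ∧ y ∈ V) (hH : H.IsAcyclic) (hs : s ∉ V)
    (hSV : S ⊆ V) (hS : S.Pairwise fun x y => ¬H.Reachable x y)
    (hreach : ∀ p ∈ V, ∃ x ∈ S, H.Reachable p x) :
    IsSpanningTreeOn (insert s V) (H ⊔ starOn s S) := by
  have hsS : ∀ {x}, x ∈ S → s ≠ x := fun hx h => hs (h ▸ hSV hx)
  have hreach_s : ∀ p ∈ insert s V, (H ⊔ starOn s S).Reachable p s := by
    rintro p (rfl | hp)
    · rfl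
    · obtain ⟨x, hx, hpx⟩ := hreach p hp
      exact (hpx.mono le_sup_left).trans
        ((starOn_adj_center hx (hsS hx)).reachable.mono le_sup_right).symm
  refine ⟨fun x y hxy => ?_, hH.sup_starOn (fun v h => hs (hHV h).1) hS,
    fun x hx y hy => (hreach_s x hx).trans (hreach_s y hy).symm⟩
  rcases hxy with hxy | hxy
  · exact ⟨.inr (hHV hxy).1, .inr (hHV hxy).2⟩
  · rcases (starOn_adj.mp hxy).1 with ⟨rfl, hy⟩ | ⟨rfl, hx⟩
    exacts [⟨.inl rfl, .inr (hSV hy)⟩, ⟨.inr (hSV hx), .inl rfl⟩]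

theorem stmt7_general (P : Finset Pt) (T : SimpleGraph Pt) (hT : IsMSTOn ↑P T)
    (hdist : DistinctEdgeLengths T)
    (s : Pt) (hs : s ∉ P)
    (a b c d : Pt) (ha : a ∈ P) (hb : b ∈ P) (hc : c ∈ P) (hd : d ∈ P)
    (eab eac ead ebc ebd ecd : Sym2 Pt)
    (heab : BottleneckEdge T a b eab) (heac : BottleneckEdge T a c eac)
    (head : BottleneckEdge T a d ead) (hebc : BottleneckEdge T b c ebc)
    (hebd : BottleneckEdge T b d ebd) (hecd : BottleneckEdge T c d ecd) :
    IsSpanningTreeOn (insert s ↑P)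
      (SimpleGraph.fromEdgeSet
        ((T.edgeSet \ {eab, eac, ead, ebc, ebd, ecd}) ∪
          {s(s, a), s(s, b), s(s, c), s(s, d)})) := by
  classical
  obtain ⟨⟨hTP, hTacyc, hTconn⟩, -⟩ := hT
  set S : Set Pt := {a, b, c, d}
  set F : Finset (Sym2 Pt) := {eab, eac, ead, ebc, ebd, ecd}
  have hSP : S ⊆ P := by simp [S, Set.insert_subset_iff, ha, hb, hc, hd]
  obtain ⟨ha', hb', hc', hd'⟩ : a ∈ S ∧ b ∈ S ∧ c ∈ S ∧ d ∈ S := by simp [S]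
  have hF : ∀ f ∈ F, ∃ y ∈ S, ∃ z ∈ S, BottleneckEdge T y z f := by
    simp only [F, Finset.mem_insert, Finset.mem_singleton]
    rintro f (rfl | rfl | rfl | rfl | rfl | rfl)
    exacts [⟨a, ha', b, hb', heab⟩, ⟨a, ha', c, hc', heac⟩, ⟨a, ha', d, hd', head⟩,
      ⟨b, hb', c, hc', hebc⟩, ⟨b, hb', d, hd', hebd⟩, ⟨c, hc', d, hd', hecd⟩]
  have hsep : S.Pairwise fun x y => ¬(T.deleteEdges ↑F).Reachable x y := by
    have : Std.Symm fun x y => ¬(T.deleteEdges ↑F).Reachable x y :=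
      ⟨fun x y h h' => h h'.symm⟩
    have key {x y e} (h : BottleneckEdge T x y e) (he : e ∈ F) (_ : x ≠ y) :
        ¬(T.deleteEdges ↑F).Reachable x y :=
      h.not_reachable_deleteEdges_s7 he
    simp only [S, Set.pairwise_insert_of_symm, Set.pairwise_singleton, Set.mem_insert_iff,
      Set.mem_singleton_iff, forall_eq_or_imp, forall_eq, true_and]
    exact ⟨⟨key hecd (by simp [F]), key hebc (by simp [F]), key hebd (by simp [F])⟩,
      key heab (by simp [F]), key heac (by simp [F]), key head (by simp [F])⟩
  have hG : fromEdgeSet ((T.edgeSet \ {eab, eac, ead, ebc, ebd, ecd}) ∪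
      {s(s, a), s(s, b), s(s, c), s(s, d)}) = T.deleteEdges ↑F ⊔ starOn s S := by
    rw [fromEdgeSet_union, ← edgeSet_deleteEdges, fromEdgeSet_edgeSet]
    simp [F, S, starOn, Set.image_insert_eq]
  rw [hG]
  refine isSpanningTreeOn_insert_sup_starOn (fun x y h => hTP h.1)
    (hTacyc.anti (T.deleteEdges_le _)) (by exact_mod_cast hs) hSP hsep fun p hp => ?_
  exact exists_reachable_deleteEdges_of_bottleneck hdist
    (fun y hy z hz => hTconn y (hSP hy) z (hSP hz)) hF ha' (hTconn p hp a ha)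

theorem stmt7 (P : Finset Pt) (T : SimpleGraph Pt) (hT : IsMSTOn ↑P T)
    (hdist : DistinctEdgeLengths T)
    (s : Pt) (hs : s ∉ P)
    (a b c d : Pt) (ha : a ∈ P) (hb : b ∈ P) (hc : c ∈ P) (hd : d ∈ P)
    (hab : a ≠ b) (hac : a ≠ c) (had : a ≠ d)
    (hbc : b ≠ c) (hbd : b ≠ d) (hcd : c ≠ d)
    (eab eac ead ebc ebd ecd : Sym2 Pt)
    (heab : BottleneckEdge T a b eab) (heac : BottleneckEdge T a c eac)
    (head : BottleneckEdge T a d ead) (hebc : BottleneckEdge T b c ebc)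
    (hebd : BottleneckEdge T b d ebd) (hecd : BottleneckEdge T c d ecd) :
    IsSpanningTreeOn (insert s ↑P)
      (SimpleGraph.fromEdgeSet
        ((T.edgeSet \ {eab, eac, ead, ebc, ebd, ecd}) ∪
          {s(s, a), s(s, b), s(s, c), s(s, d)})) :=
  stmt7_general P T hT hdist s hs a b c d ha hb hc hd eab eac ead ebc ebd ecd heab heac head hebc
    hebd hecd
end
end

section
/- Let E be a real normed vector space of dimension 2 (finrank ℝ E = 2). Then there exist six points y₀, y₁, …, y₅ on the unit sphere of E (‖y_i‖ = 1 for all i) such that for every i, ‖y_{(i+1) mod 6} − y_i‖ = 1. -/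
theorem stmt15 (E : Type*) [NormedAddCommGroup E] [NormedSpace ℝ E]
    (hdim : Module.finrank ℝ E = 2) :
    ∃ y : Fin 6 → E, (∀ i, ‖y i‖ = 1) ∧ ∀ i : Fin 6, ‖y (i + 1) - y i‖ = 1 := by
  have hrank : Module.rank ℝ E = 2 := Cardinal.toNat_eq_ofNat.mp hdim
  have hr1 : 1 < Module.rank ℝ E := by rw [hrank]; norm_num
  have hnt : Nontrivial E := rank_pos_iff_nontrivial.mp (by rw [hrank]; norm_num)
  obtain ⟨u, hu⟩ := exists_norm_eq E (zero_le_one)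
  have hconn : IsConnected (Metric.sphere (0:E) 1) := isConnected_sphere hr1 0 zero_le_one
  have humem : u ∈ Metric.sphere (0:E) 1 := by simpa [mem_sphere_zero_iff_norm] using hu
  have hnumem : -u ∈ Metric.sphere (0:E) 1 := by simp [mem_sphere_zero_iff_norm, hu]
  obtain ⟨v, hvmem, hv1⟩ := hconn.isPreconnected.intermediate_value₂ humem hnumem
    (f := fun v => ‖v - u‖) (g := fun _ => (1:ℝ))
    (by fun_prop) (by fun_prop)
    (by simp) (by
      rw [show -u - u = (-2 : ℝ) • u by module, norm_smul]
      simp [hu])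
  have hv : ‖v‖ = 1 := mem_sphere_zero_iff_norm.mp hvmem
  have hvu : ‖v - u‖ = 1 := hv1
  have huv : ‖u - v‖ = 1 := by rw [norm_sub_rev]; exact hvu
  refine ⟨![u, v, v - u, -u, -v, u - v], ?_, ?_⟩
  · intro i
    fin_cases i
    · exact hu
    · exact hv
    · exact hvu
    · simpa using hu
    · simpa using hv
    · exact huv
  · intro i
    fin_cases i
    · show ‖v - u‖ = 1; exact hvu
    · show ‖(v - u) - v‖ = 1; rw [show (v - u) - v = -u by abel]; simpa using hu
    · show ‖-u - (v - u)‖ = 1; rw [show -u - (v - u) = -v by abel]; simpa using hv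
    · show ‖-v - -u‖ = 1; rw [show -v - -u = u - v by abel]; exact huv
    · show ‖(u - v) - -v‖ = 1; rw [show (u - v) - -v = u by abel]; exact hu
    · show ‖u - (u - v)‖ = 1; rw [show u - (u - v) = v by abel]; exact hv
end
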